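/- arXiv:1701.06127 — 3 statements merged into one kernel-verified Lean document; each statement's English description precedes it below -/
import Mathlib

section
/- Let R be a ring in which 2 is invertible and let a be a central element with a^3 = 0. For X, Y ∈ R set x = 1 + a*X + (1/2)*a^2*X^2 and y = 1 + a*Y + (1/2)*a^2*Y^2. Then the commutator satisfies x*y*x⁻¹*y⁻¹ = 1 + a^2*(X*Y - Y*X). -/
theorem stmt_2 {R : Type*} [Ring R] [Invertible (2 : R)] (a : R)
    (hc : ∀ x : R, a * x = x * a) (ha : a ^ 3 = 0) (X Y : R) :
    (1 + a * X + ⅟(2 : R) * a ^ 2 * X ^ 2) * (1 + a * Y + ⅟(2 : R) * a ^ 2 * Y ^ 2) *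
      (1 - a * X + ⅟(2 : R) * a ^ 2 * X ^ 2) * (1 - a * Y + ⅟(2 : R) * a ^ 2 * Y ^ 2)
      = 1 + a ^ 2 * (X * Y - Y * X) := by
  have h2c : ∀ x : R, ⅟(2 : R) * x = x * ⅟(2 : R) := fun x => by
    have : Commute (2 : R) x := by
      have := (Commute.one_left x).add_left (Commute.one_left x)
      rwa [one_add_one_eq_two] at this
    exact this.invOf_left
  have h4 : a ^ 2 * a ^ 2 = 0 := by
    rw [← pow_add, show (2+2 : ℕ) = 4 from rfl, show a ^ 4 = a ^ 3 * a from pow_succ a 3, ha,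
      zero_mul]
  set b : R := ⅟(2 : R) * a ^ 2 with hb
  have haa : a * a = b + b := by
    rw [hb, ← add_mul, invOf_two_add_invOf_two, one_mul, pow_two]
  have hab : a * b = 0 := by
    rw [hb, hc, mul_assoc, ← pow_succ, ha, mul_zero]
  have hba : b * a = 0 := by
    rw [hb, mul_assoc, ← pow_succ, ha, mul_zero]
  have hbb : b * b = 0 := by
    rw [hb, mul_assoc (⅟(2:R)) (a^2), ← mul_assoc (a^2) (⅟(2:R)) (a^2), ← h2c (a^2),
      mul_assoc (⅟(2:R)) (a^2) (a^2), h4, mul_zero, mul_zero]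
  have hbc : ∀ x : R, b * x = x * b := fun x =>
    Commute.mul_left (h2c x) ((Commute.pow_left (hc x) 2)) 
  clear_value b
  rw [show a ^ 2 * (X * Y - Y * X) = (b + b) * (X * Y - Y * X) by rw [← haa, ← pow_two]]
  simp only [pow_two]
  simp only [mul_add, add_mul, mul_sub, sub_mul, mul_assoc, hab, hba, hbb, hc, hbc, haa,
    mul_one, one_mul, mul_zero, zero_mul, add_zero, zero_add]
  noncomm_ring
end

section
/- Let K be a commutative ring and let a ∈ K with a^2 = 0. Then for every n × n matrix X over K, det(1 + a • X) = 1 + a * tr(X). -/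
theorem stmt_4 {K : Type*} [CommRing K] (a : K) (ha : a ^ 2 = 0)
    {n : ℕ} (X : Matrix (Fin n) (Fin n) K) :
    (1 + a • X).det = 1 + a * X.trace := by
  rw [Matrix.det_one_add_smul a, ha, mul_zero, add_zero, mul_comm]
end

section
/- Let F be a field, V an F-vector space with an alternating bilinear form ⟨·,·⟩, and ψ : F → ℂˣ an additive character. Let G be a group acting on V on the right by linear maps σ_g preserving the form, and let v : G → V satisfy v(g*h) = v(h) • σ_g⁻¹ + v(g). Suppose char F ≠ 2 and define c(g,h) = ψ((1/2)*⟨v(g), v(g*h)⟩). Then c is a 2-cocycle: c(g,h)*c(g*h,k) = c(h,k)*c(g,h*k) for all g, h, k ∈ G. -/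
theorem stmt_8 {F V G : Type*} [Field F] [AddCommGroup V] [Module F V] [Group G]
    (h2 : (2 : F) ≠ 0)
    (B : LinearMap.BilinForm F V) (halt : ∀ x : V, B x x = 0)
    (ψ : F → ℂˣ) (hψ : ∀ x y : F, ψ (x + y) = ψ x * ψ y)
    (σ : G → V ≃ₗ[F] V)
    (hσ1 : ∀ w : V, σ 1 w = w)
    (hσmul : ∀ g h : G, ∀ w : V, σ (g * h) w = σ h (σ g w))
    (hσB : ∀ g : G, ∀ x y : V, B (σ g x) (σ g y) = B x y)
    (v : G → V)
    (hv : ∀ g h : G, v (g * h) = σ g⁻¹ (v h) + v g) :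
    ∀ g h k : G,
      ψ ((2 : F)⁻¹ * B (v g) (v (g * h))) * ψ ((2 : F)⁻¹ * B (v (g * h)) (v (g * h * k)))
        = ψ ((2 : F)⁻¹ * B (v h) (v (h * k))) * ψ ((2 : F)⁻¹ * B (v g) (v (g * (h * k)))) := by
  have skew : ∀ x y : V, B x y = - B y x := by
    intro x y
    have := halt (x + y)
    simp only [map_add, LinearMap.add_apply, halt] at this
    linear_combination this
  intro g h k
  set x := v g with hx
  set y := (σ g⁻¹) (v h) with hy
  set z := (σ g⁻¹) ((σ h⁻¹) (v k)) with hz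
  have e1 : v (g * h) = y + x := hv g h
  have hzz : (σ (g * h)⁻¹) (v k) = z := by
    rw [mul_inv_rev, hσmul]
  have e2 : v (g * h * k) = z + (y + x) := by rw [hv (g * h) k, hzz, e1]
  have e3 : v (h * k) = (σ h⁻¹) (v k) + v h := hv h k
  have e4 : v (g * (h * k)) = (z + y) + x := by
    rw [hv g (h * k), e3, map_add]
  have hyz : B (v h) ((σ h⁻¹) (v k)) = B y z := (hσB g⁻¹ _ _).symm
  have hvh : B (v h) (v h) = 0 := halt _
  rw [← hψ, ← hψ, ← mul_add, ← mul_add]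
  congr 2
  rw [e1, e2, e3, e4]
  simp only [map_add, LinearMap.add_apply, halt, hyz]
  have h1 := halt x; have h2 := halt y; have h3 := halt z
  have s1 := skew x y; have s2 := skew x z; have s3 := skew y z
  have hvh2 : B (v h) (v h) = 0 := halt _
  linear_combination s1
end
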